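/- arXiv:2004.08232 — 6 statements merged into one kernel-verified Lean document; each statement's English description precedes it below -/
import Mathlib

section
/- Let F be a field of characteristic not 2 and let a₁, a₂ ∈ F be nonzero. Then for every matrix A ∈ M_2(F) there exist matrices X₁, X₂ ∈ M_2(F) such that a₁X₁² + a₂X₂² = A. -/
theorem stmt_1 (F : Type*) [Field F] (h2 : (2 : F) ≠ 0)
    (a₁ a₂ : F) (h₁ : a₁ ≠ 0) (h₂ : a₂ ≠ 0) (A : Matrix (Fin 2) (Fin 2) F) :
    ∃ X₁ X₂ : Matrix (Fin 2) (Fin 2) F, a₁ • X₁ ^ 2 + a₂ • X₂ ^ 2 = A := by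
  set β : F := (a₁⁻¹ - (A 0 0 + A 1 1)) / 2 with hβ
  set δ : F := A 0 0 * A 1 1 - A 0 1 * A 1 0 with hδ
  set v : F := -(a₁ * (β ^ 2 - δ)) / a₂ with hv
  refine ⟨!![A 0 0 + β, A 0 1; A 1 0, A 1 1 + β], !![0, 1; v, 0], ?_⟩
  have h16 : (16 : F) ≠ 0 := by have h := pow_ne_zero 4 h2; norm_num at h; exact h
  ext i j
  fin_cases i <;> fin_cases j <;>
    simp [pow_two, Matrix.mul_apply, Fin.sum_univ_succ, hβ, hδ, hv] <;>
    field_simp <;> ring_nf <;> field_simp <;> ring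
end

section
/- Let F be a perfect field of characteristic 2 and let a₁, a₂ ∈ F be nonzero. Then for every matrix A ∈ M_2(F) there exist matrices X₁, X₂ ∈ M_2(F) such that a₁X₁² + a₂X₂² = A. -/
open Matrix

lemma sq_exists_of_char_two {F : Type*} [Field F] [CharP F 2] [PerfectField F] (x : F) :
    ∃ y : F, y ^ 2 = x := by
  obtain ⟨y, hy⟩ := surjective_frobenius F 2 x
  exact ⟨y, hy⟩

lemma sqrt_mat {F : Type*} [Field F] [CharP F 2] [PerfectField F]
    (B : Matrix (Fin 2) (Fin 2) F) (h : B 0 0 + B 1 1 ≠ 0) :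
    ∃ X : Matrix (Fin 2) (Fin 2) F, X ^ 2 = B := by
  obtain ⟨α, hα⟩ := sq_exists_of_char_two ((B 0 0 + B 1 1)⁻¹)
  obtain ⟨β, hβ⟩ := sq_exists_of_char_two (α ^ 2 * (B 0 0 * B 1 1 + B 0 1 * B 1 0))
  have hα' : α ^ 2 * (B 0 0 + B 1 1) = 1 := by
    rw [hα]; field_simp
  have h2 : (2 : F) = 0 := CharP.cast_eq_zero F 2
  refine ⟨α • B + β • 1, ?_⟩
  have e00 : (α * B 0 0 + β) * (α * B 0 0 + β) + α * B 0 1 * (α * B 1 0) = B 0 0 := by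
    linear_combination hβ + B 0 0 * hα' + (α^2 * B 0 1 * B 1 0 + α * β * B 0 0) * h2
  have e01 : (α * B 0 0 + β) * (α * B 0 1) + α * B 0 1 * (α * B 1 1 + β) = B 0 1 := by
    linear_combination B 0 1 * hα' + (α * β * B 0 1) * h2
  have e10 : α * B 1 0 * (α * B 0 0 + β) + (α * B 1 1 + β) * (α * B 1 0) = B 1 0 := by
    linear_combination B 1 0 * hα' + (α * β * B 1 0) * h2
  have e11 : α * B 1 0 * (α * B 0 1) + (α * B 1 1 + β) * (α * B 1 1 + β) = B 1 1 := by
    linear_combination hβ + B 1 1 * hα' + (α^2 * B 0 1 * B 1 0 + α * β * B 1 1) * h2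
  ext i j
  fin_cases i <;> fin_cases j <;>
    simp [pow_two, Matrix.mul_apply, Fin.sum_univ_two, Matrix.one_apply] <;>
    [linear_combination e00; linear_combination e01; linear_combination e10;
     linear_combination e11]

theorem stmt_3 (F : Type*) [Field F] [CharP F 2] [PerfectField F]
    (a₁ a₂ : F) (h₁ : a₁ ≠ 0) (h₂ : a₂ ≠ 0) (A : Matrix (Fin 2) (Fin 2) F) :
    ∃ X₁ X₂ : Matrix (Fin 2) (Fin 2) F, a₁ • X₁ ^ 2 + a₂ • X₂ ^ 2 = A := by
  by_cases hT : A 0 0 + A 1 1 = 0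
  · set E : Matrix (Fin 2) (Fin 2) F := !![1,0;0,0] with hEdef
    have hE : E ^ 2 = E := by
      ext i j; fin_cases i <;> fin_cases j <;>
        simp [pow_two, hEdef, Matrix.mul_apply, Fin.sum_univ_two]
    obtain ⟨X, hX⟩ := sqrt_mat (a₂⁻¹ • (A - a₁ • E)) (by
      have : a₂⁻¹ • (A - a₁ • E) 0 0 + a₂⁻¹ • (A - a₁ • E) 1 1
          = a₂⁻¹ * (A 0 0 + A 1 1 - a₁) := by
        simp [hEdef, Matrix.sub_apply, Matrix.smul_apply]; ring
      simp only [Matrix.smul_apply] at this ⊢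
      rw [this, hT, zero_sub]
      exact mul_ne_zero (inv_ne_zero h₂) (neg_ne_zero.mpr h₁))
    refine ⟨E, X, ?_⟩
    rw [hE, hX, smul_smul, mul_inv_cancel₀ h₂, one_smul]
    abel
  · obtain ⟨X, hX⟩ := sqrt_mat (a₂⁻¹ • A) (by
      simp only [Matrix.smul_apply, smul_eq_mul, ← mul_add]
      exact mul_ne_zero (inv_ne_zero h₂) hT)
    refine ⟨0, X, ?_⟩
    rw [hX, smul_smul, mul_inv_cancel₀ h₂, one_smul]
    simp
end

section
/- Let F be a perfect field and a₁, …, a_m ∈ F. The diagonal quadratic form Σᵢ aᵢXᵢ² is universal over M_2(F) (i.e., for every A ∈ M_2(F) there exist X₁,…,X_m ∈ M_2(F) with Σᵢ aᵢXᵢ² = A) if and only if at least two of a₁, …, a_m are nonzero. -/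
/-!
Necessity: with at most one nonzero coefficient the sum is `c • Z ^ 2`, and this is never the
nonzero square-zero matrix `N = !![0, 1; 0, 0]`, since `c • Z ^ 2 = N` would make `Z` nilpotent,
hence `Z ^ 2 = 0` in dimension two.

Sufficiency, for `α, β ≠ 0`: by Cayley–Hamilton `A ^ 2 = tr A • A - det A • 1`, so every scalar
matrix is `α • X ^ 2`, and a matrix `B` with `det B = 0` satisfies `B ^ 2 = tr B • B`, so it is
`γ • X ^ 2` as soon as `tr B ∈ γ • (Fˣ) ^ 2`. If `2 ≠ 0`, a suitable `Y = A + μ • 1` makes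
`A - β • Y ^ 2` scalar. In characteristic 2 every element is a square: if `tr A ≠ 0` take
`Y = λ • A` with `β λ ^ 2 tr A = 1`; if `tr A = 0`, split `A` into two singular matrices of
nonzero trace.
-/

namespace Matrix

variable {K : Type*} [Field K]

open Polynomial in
theorem pow_card_eq_zero_of_isNilpotent {n : Type*} [Fintype n] [DecidableEq n]
    {M : Matrix n n K} (hM : IsNilpotent M) : M ^ Fintype.card n = 0 := by
  have hchar : M.charpoly = X ^ Fintype.card n :=
    sub_eq_zero.mp (isNilpotent_charpoly_sub_pow_of_isNilpotent hM).eq_zero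
  simpa [hchar] using M.aeval_self_charpoly

open Polynomial in
theorem sq_fin_two (A : Matrix (Fin 2) (Fin 2) K) : A ^ 2 = A.trace • A - A.det • 1 := by
  have h := A.aeval_self_charpoly
  simp only [charpoly_fin_two, map_add, map_sub, aeval_X_pow, aeval_X, aeval_C, map_mul,
    Algebra.algebraMap_eq_smul_one, smul_mul_assoc, one_mul] at h
  rw [← sub_eq_zero, ← h]
  abel

theorem smul_sq_ne_of_sq_eq_zero {N : Matrix (Fin 2) (Fin 2) K} (hN : N ^ 2 = 0) (hN₀ : N ≠ 0)
    (c : K) (Z : Matrix (Fin 2) (Fin 2) K) : c • Z ^ 2 ≠ N := by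
  rintro rfl
  have hc : c ≠ 0 := by rintro rfl; simp at hN₀
  have hZ : IsNilpotent Z := ⟨4, by
    rw [_root_.smul_pow, ← pow_mul] at hN
    exact (smul_eq_zero.mp hN).resolve_left (pow_ne_zero _ hc)⟩
  have hZ2 : Z ^ 2 = 0 := by simpa using pow_card_eq_zero_of_isNilpotent hZ
  exact hN₀ (by rw [hZ2, smul_zero])

variable {α β γ : K}

theorem exists_smul_sq_eq_smul_one (hγ : γ ≠ 0) (c : K) :
    ∃ X : Matrix (Fin 2) (Fin 2) K, γ • X ^ 2 = c • 1 := by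
  refine ⟨!![0, 1; c / γ, 0], ?_⟩
  rw [sq_fin_two, trace_fin_two_of, det_fin_two_of]
  simp [smul_smul, mul_div_cancel₀ _ hγ]

theorem exists_smul_sq_eq_of_det_eq_zero (hγ : γ ≠ 0) {c : K} (hc : c ≠ 0)
    {B : Matrix (Fin 2) (Fin 2) K} (hdet : B.det = 0) (htr : B.trace = γ * c ^ 2) :
    ∃ X : Matrix (Fin 2) (Fin 2) K, γ • X ^ 2 = B := by
  refine ⟨(γ * c)⁻¹ • B, ?_⟩
  rw [_root_.smul_pow, sq_fin_two, hdet, htr, zero_smul, sub_zero, smul_smul, smul_smul]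
  convert one_smul K B
  field_simp

-- For `Y = l • A + μ • 1`, Cayley–Hamilton gives `β • Y ^ 2 = A + (scalar)` exactly under `h`.
theorem exists_smul_sq_add_smul_sq_of_trace (hα : α ≠ 0) {A : Matrix (Fin 2) (Fin 2) K}
    {l μ : K} (h : β * (l ^ 2 * A.trace + 2 * l * μ) = 1) :
    ∃ X Y : Matrix (Fin 2) (Fin 2) K, α • X ^ 2 + β • Y ^ 2 = A := by
  obtain ⟨X, hX⟩ := exists_smul_sq_eq_smul_one hα (β * (l ^ 2 * A.det - μ ^ 2))
  refine ⟨X, l • A + μ • 1, ?_⟩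
  have hY : (l • A + μ • 1 : Matrix (Fin 2) (Fin 2) K) ^ 2
      = (l ^ 2 * A.trace + 2 * l * μ) • A + (μ ^ 2 - l ^ 2 * A.det) • 1 := by
    simp only [sq, add_mul, mul_add, smul_mul_assoc, mul_smul_comm, one_mul, mul_one]
    rw [← sq A, sq_fin_two A]
    module
  rw [hX, hY, smul_add, smul_smul, h, one_smul, smul_smul]
  module

theorem exists_smul_sq_add_smul_sq_of_two_ne_zero (h2 : (2 : K) ≠ 0) (hα : α ≠ 0) (hβ : β ≠ 0)
    (A : Matrix (Fin 2) (Fin 2) K) :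
    ∃ X Y : Matrix (Fin 2) (Fin 2) K, α • X ^ 2 + β • Y ^ 2 = A :=
  exists_smul_sq_add_smul_sq_of_trace hα (l := 1) (μ := (β⁻¹ - A.trace) / 2) (by field_simp; ring)

section CharTwo

variable [CharP K 2]

theorem exists_add_eq_of_trace_eq_zero {A : Matrix (Fin 2) (Fin 2) K} (htr : A.trace = 0) :
    ∃ B C : Matrix (Fin 2) (Fin 2) K,
      B.det = 0 ∧ B.trace ≠ 0 ∧ C.det = 0 ∧ C.trace ≠ 0 ∧ B + C = A := by
  rw [trace_fin_two, CharTwo.add_eq_zero] at htr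
  by_cases hp : A 0 0 = 0
  · refine ⟨!![1, A 0 1; 0, 0], !![1, 0; A 1 0, 0], by simp, by simp, by simp, by simp, ?_⟩
    ext i j; fin_cases i <;> fin_cases j <;> simp [hp, ← htr, CharTwo.add_self_eq_zero]
  · refine ⟨!![A 0 0, A 0 1; 0, 0], !![0, 0; A 1 0, A 1 1], by simp, by simpa, by simp,
      by simpa [← htr], ?_⟩
    ext i j; fin_cases i <;> fin_cases j <;> simp

variable [PerfectField K]

theorem exists_smul_sq_eq_of_det_eq_zero_of_trace_ne_zero (hγ : γ ≠ 0)
    {B : Matrix (Fin 2) (Fin 2) K} (hdet : B.det = 0) (htr : B.trace ≠ 0) :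
    ∃ X : Matrix (Fin 2) (Fin 2) K, γ • X ^ 2 = B := by
  obtain ⟨c, hc⟩ := surjective_frobenius K 2 (B.trace / γ)
  rw [frobenius_def] at hc
  have hc₀ : c ≠ 0 := by
    rintro rfl
    exact div_ne_zero htr hγ (by rw [← hc]; simp)
  exact exists_smul_sq_eq_of_det_eq_zero hγ hc₀ hdet (by rw [hc]; field_simp)

theorem exists_smul_sq_add_smul_sq_of_charTwo (hα : α ≠ 0) (hβ : β ≠ 0)
    (A : Matrix (Fin 2) (Fin 2) K) :
    ∃ X Y : Matrix (Fin 2) (Fin 2) K, α • X ^ 2 + β • Y ^ 2 = A := by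
  by_cases htr : A.trace = 0
  · obtain ⟨B, C, hB, hBtr, hC, hCtr, rfl⟩ := exists_add_eq_of_trace_eq_zero htr
    obtain ⟨X, rfl⟩ := exists_smul_sq_eq_of_det_eq_zero_of_trace_ne_zero hα hB hBtr
    obtain ⟨Y, rfl⟩ := exists_smul_sq_eq_of_det_eq_zero_of_trace_ne_zero hβ hC hCtr
    exact ⟨X, Y, rfl⟩
  · obtain ⟨l, hl⟩ := surjective_frobenius K 2 (β * A.trace)⁻¹
    rw [frobenius_def] at hl
    exact exists_smul_sq_add_smul_sq_of_trace hα (l := l) (μ := 0)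
      (by rw [hl, mul_zero, add_zero]; field_simp)

end CharTwo

theorem exists_smul_sq_add_smul_sq [PerfectField K] (hα : α ≠ 0) (hβ : β ≠ 0)
    (A : Matrix (Fin 2) (Fin 2) K) :
    ∃ X Y : Matrix (Fin 2) (Fin 2) K, α • X ^ 2 + β • Y ^ 2 = A := by
  by_cases h2 : (2 : K) = 0
  · have := CharTwo.of_one_ne_zero_of_two_eq_zero one_ne_zero h2
    exact exists_smul_sq_add_smul_sq_of_charTwo hα hβ A
  · exact exists_smul_sq_add_smul_sq_of_two_ne_zero h2 hα hβ A

end Matrix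

theorem Fintype.sum_smul_eq_zero_or_eq_single {ι R M : Type*} [Fintype ι] [Semiring R]
    [AddCommMonoid M] [Module R M] {a : ι → R} (ha : ∀ i j, i ≠ j → a i ≠ 0 → a j = 0)
    (v : ι → M) : ∑ i, a i • v i = 0 ∨ ∃ i, ∑ j, a j • v j = a i • v i := by
  by_cases h : ∃ i, a i ≠ 0
  · obtain ⟨i, hi⟩ := h
    exact .inr ⟨i, Fintype.sum_eq_single i fun j hj => by rw [ha i j hj.symm hi, zero_smul]⟩
  · push Not at h
    exact .inl (by simp [h])

theorem stmt_4 (F : Type*) [Field F] [PerfectField F] (m : ℕ) (a : Fin m → F) :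
    (∀ A : Matrix (Fin 2) (Fin 2) F,
        ∃ X : Fin m → Matrix (Fin 2) (Fin 2) F, ∑ i, a i • (X i) ^ 2 = A) ↔
      ∃ i j : Fin m, i ≠ j ∧ a i ≠ 0 ∧ a j ≠ 0 := by
  constructor
  · intro h
    by_contra! ha
    have hN : (!![0, 1; 0, 0] : Matrix (Fin 2) (Fin 2) F) ^ 2 = 0 := by
      ext i j; fin_cases i <;> fin_cases j <;> simp [sq]
    have hN₀ : (!![0, 1; 0, 0] : Matrix (Fin 2) (Fin 2) F) ≠ 0 := fun h => by
      simpa using congr_fun₂ h 0 1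
    obtain ⟨X, hX⟩ := h !![0, 1; 0, 0]
    rcases Fintype.sum_smul_eq_zero_or_eq_single ha (X · ^ 2) with h0 | ⟨i, hi⟩
    · exact hN₀ (hX ▸ h0)
    · exact Matrix.smul_sq_ne_of_sq_eq_zero hN hN₀ (a i) (X i) (hi ▸ hX)
  · rintro ⟨i, j, hij, hi, hj⟩ A
    obtain ⟨X, Y, hXY⟩ := Matrix.exists_smul_sq_add_smul_sq hi hj A
    refine ⟨Pi.single i X + Pi.single j Y, ?_⟩
    rw [Fintype.sum_eq_add i j hij fun k hk => by simp [hk.1, hk.2]]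
    simpa [hij, hij.symm] using hXY
end

section
/- The quadratic form X₁² + X₂² is not universal over M_2(𝔽₂(X)): there exist matrices A ∈ M_2(𝔽₂(X)) (for example A = [[X,0],[0,0]]) such that A ≠ B² + C² for all B, C ∈ M_2(𝔽₂(X)). -/
private instance : CharP (RatFunc (ZMod 2)) 2 :=
  charP_of_injective_algebraMap (algebraMap (ZMod 2) (RatFunc (ZMod 2))).injective 2

private lemma trace_sq (B : Matrix (Fin 2) (Fin 2) (RatFunc (ZMod 2))) :
    Matrix.trace (B ^ 2) = (Matrix.trace B) ^ 2 := by
  have h2 : (2 : RatFunc (ZMod 2)) = 0 := by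
    have := CharP.cast_eq_zero (RatFunc (ZMod 2)) 2
    simpa using this
  simp [pow_two, Matrix.trace, Matrix.mul_apply, Fin.sum_univ_two, Matrix.diag]
  linear_combination (B 0 1 * B 1 0 - B 0 0 * B 1 1) * h2

private lemma not_sq (y : RatFunc (ZMod 2)) : y ^ 2 ≠ RatFunc.X := by
  intro h
  rcases eq_or_ne y 0 with rfl | hy
  · simp at h
    exact RatFunc.X_ne_zero h.symm
  · have := congrArg RatFunc.intDegree h
    rw [pow_two, RatFunc.intDegree_mul hy hy, RatFunc.intDegree_X] at this
    omega

theorem stmt_6 :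
    ∃ A : Matrix (Fin 2) (Fin 2) (RatFunc (ZMod 2)),
      A = !![RatFunc.X, 0; 0, 0] ∧
        ∀ B C : Matrix (Fin 2) (Fin 2) (RatFunc (ZMod 2)), B ^ 2 + C ^ 2 ≠ A := by
  refine ⟨_, rfl, ?_⟩
  intro B C h
  have ht := congrArg Matrix.trace h
  rw [Matrix.trace_add, trace_sq B, trace_sq C] at ht
  have hA : Matrix.trace !![RatFunc.X, (0 : RatFunc (ZMod 2)); 0, 0] = RatFunc.X := by
    simp [Matrix.trace, Fin.sum_univ_two, Matrix.diag]
  rw [hA] at ht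
  have hsum : (Matrix.trace B + Matrix.trace C) ^ 2 = RatFunc.X := by
    rw [add_pow_char]; exact ht
  exact not_sq _ hsum
end

section
/- Let F be a perfect field and m ≥ 2. If a₁, a₂ ∈ F are both nonzero and a₃ = ⋯ = a_m are arbitrary elements of F, then for every A ∈ M_2(F) there exist X₁, …, X_m ∈ M_2(F) with Σᵢ aᵢXᵢ² = A; in fact one may take Xᵢ = 0 for i ≥ 3. -/
/-! By Cayley–Hamilton, `(M + e • 1) ^ 2 = (tr M + 2 e) • M` for a `2 × 2` matrix `M` whenever
`e ^ 2 = det M`, so `M` is a square as soon as `tr M + 2 e` is a nonzero square.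

If `2 ≠ 0`, a scalar `c` can be chosen so that `a⁻¹ • (A - c • 1)` meets this criterion with
`tr M + 2 e = 1`, and the scalar matrix `c • 1` is `b • Y ^ 2` for `Y = !![0, c / b; 1, 0]`.
In characteristic `2` every element of a perfect field is a square, so every matrix of nonzero
trace is a square: then `A = a • (a⁻¹ • A)`, or, if `tr A = 0`, `A = (A - E) + E` with
`E = single 0 0 1`, both summands of trace `1`. -/

namespace Matrix

section CommRing

variable {R : Type*} [CommRing R]

theorem sq_eq_trace_smul_sub_det_smul_one (M : Matrix (Fin 2) (Fin 2) R) :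
    M ^ 2 = M.trace • M - M.det • 1 := by
  ext i j
  fin_cases i <;> fin_cases j <;>
    simp [sq, mul_apply, trace_fin_two, det_fin_two] <;> ring

theorem sq_antidiag_one (x : R) : !![0, x; 1, 0] ^ 2 = x • (1 : Matrix (Fin 2) (Fin 2) R) := by
  ext i j
  fin_cases i <;> fin_cases j <;> simp [sq]

end CommRing

variable {F : Type*} [Field F] {a b : F}

theorem inv_smul_add_smul_one_sq {M : Matrix (Fin 2) (Fin 2) F} {s e : F} (hs : s ≠ 0)
    (hs2 : s ^ 2 = M.trace + 2 * e) (he : e ^ 2 = M.det) :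
    (s⁻¹ • (M + e • 1)) ^ 2 = M := by
  calc (s⁻¹ • (M + e • 1)) ^ 2 = s⁻¹ ^ 2 • (M ^ 2 + (2 * e) • M + e ^ 2 • 1) := by
        rw [smul_pow]; congr 1
        simp only [sq, add_mul, mul_add, mul_smul_comm, smul_mul_assoc, mul_one, one_mul]
        module
    _ = s⁻¹ ^ 2 • (s ^ 2 • M) := by
        rw [sq_eq_trace_smul_sub_det_smul_one, hs2, he]; module
    _ = M := by rw [smul_smul, ← mul_pow, inv_mul_cancel₀ hs, one_pow, one_smul]

theorem exists_sq_eq_of_charTwo_of_trace_ne_zero [CharP F 2] [PerfectRing F 2]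
    {M : Matrix (Fin 2) (Fin 2) F} (hM : M.trace ≠ 0) : ∃ X, X ^ 2 = M := by
  obtain ⟨s, hs⟩ := surjective_frobenius F 2 M.trace
  obtain ⟨e, he⟩ := surjective_frobenius F 2 M.det
  rw [frobenius_def] at hs he
  refine ⟨s⁻¹ • (M + e • 1), inv_smul_add_smul_one_sq ?_ ?_ he⟩
  · rintro rfl
    exact hM (by simpa using hs.symm)
  · rw [hs, CharTwo.two_eq_zero (R := F), zero_mul, add_zero]

theorem exists_smul_sq_eq_sub_smul_one (h2 : (2 : F) ≠ 0) (ha : a ≠ 0)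
    (A : Matrix (Fin 2) (Fin 2) F) : ∃ (c : F) (X : Matrix (Fin 2) (Fin 2) F),
      a • X ^ 2 = A - c • 1 := by
  -- With `s = 1` the condition `e ^ 2 = det M` is linear in `c`; this is its solution.
  set c := (4 * A.det - (a - A.trace) ^ 2) / (4 * a)
  set M := a⁻¹ • (A - c • 1)
  set e := (1 - M.trace) / 2
  have he : e ^ 2 = M.det := by
    have h4 : (4 : F) ≠ 0 := by
      simpa only [show (2 : F) * 2 = 4 by norm_num] using mul_ne_zero h2 h2
    simp only [e, M, c, trace_fin_two, det_fin_two, smul_apply, sub_apply, smul_eq_mul,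
      one_apply_eq, one_apply_ne zero_ne_one, one_apply_ne one_ne_zero, mul_zero, mul_one,
      sub_zero]
    field_simp
    ring
  have hX : (M + e • 1) ^ 2 = M := by
    simpa using inv_smul_add_smul_one_sq one_ne_zero (by rw [mul_div_cancel₀ _ h2]; ring) he
  exact ⟨c, M + e • 1, by rw [hX, smul_inv_smul₀ ha]⟩

theorem exists_smul_sq_add_smul_sq_eq_of_charTwo [CharP F 2] [PerfectRing F 2] (ha : a ≠ 0)
    (hb : b ≠ 0) (A : Matrix (Fin 2) (Fin 2) F) :
    ∃ X Y : Matrix (Fin 2) (Fin 2) F, a • X ^ 2 + b • Y ^ 2 = A := by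
  by_cases hA : A.trace = 0
  · set E : Matrix (Fin 2) (Fin 2) F := single 0 0 1
    obtain ⟨X, hX⟩ :=
      exists_sq_eq_of_charTwo_of_trace_ne_zero (M := a⁻¹ • (A - E)) (by simp [hA, ha, E])
    obtain ⟨Y, hY⟩ :=
      exists_sq_eq_of_charTwo_of_trace_ne_zero (M := b⁻¹ • E) (by simp [hb, E])
    exact ⟨X, Y, by rw [hX, hY, smul_inv_smul₀ ha, smul_inv_smul₀ hb, sub_add_cancel]⟩
  · obtain ⟨X, hX⟩ :=
      exists_sq_eq_of_charTwo_of_trace_ne_zero (M := a⁻¹ • A) (by simp [hA, ha])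
    exact ⟨X, 0, by simp [hX, smul_inv_smul₀ ha]⟩

theorem exists_smul_sq_add_smul_sq_eq_of_two_ne_zero (h2 : (2 : F) ≠ 0) (ha : a ≠ 0)
    (hb : b ≠ 0) (A : Matrix (Fin 2) (Fin 2) F) :
    ∃ X Y : Matrix (Fin 2) (Fin 2) F, a • X ^ 2 + b • Y ^ 2 = A := by
  obtain ⟨c, X, hX⟩ := exists_smul_sq_eq_sub_smul_one h2 ha A
  refine ⟨X, !![0, c / b; 1, 0], ?_⟩
  rw [hX, sq_antidiag_one, smul_smul, mul_div_cancel₀ _ hb, sub_add_cancel]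

theorem exists_smul_sq_add_smul_sq_eq [PerfectField F] (ha : a ≠ 0) (hb : b ≠ 0)
    (A : Matrix (Fin 2) (Fin 2) F) :
    ∃ X Y : Matrix (Fin 2) (Fin 2) F, a • X ^ 2 + b • Y ^ 2 = A := by
  by_cases h2 : (2 : F) = 0
  · have : CharP F 2 := CharTwo.of_one_ne_zero_of_two_eq_zero one_ne_zero h2
    exact exists_smul_sq_add_smul_sq_eq_of_charTwo ha hb A
  · exact exists_smul_sq_add_smul_sq_eq_of_two_ne_zero h2 ha hb A

end Matrix

theorem stmt_11 (F : Type*) [Field F] [PerfectField F] (m : ℕ) (hm : 2 ≤ m)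
    (a : Fin m → F)
    (h₁ : a ⟨0, by omega⟩ ≠ 0) (h₂ : a ⟨1, by omega⟩ ≠ 0)
    (A : Matrix (Fin 2) (Fin 2) F) :
    ∃ X : Fin m → Matrix (Fin 2) (Fin 2) F,
      (∀ i : Fin m, 2 ≤ (i : ℕ) → X i = 0) ∧ ∑ i, a i • (X i) ^ 2 = A := by
  obtain ⟨k, rfl⟩ : ∃ k, m = k + 2 := ⟨m - 2, by omega⟩
  obtain ⟨X, Y, hXY⟩ := Matrix.exists_smul_sq_add_smul_sq_eq h₁ h₂ A
  refine ⟨Fin.cons X (Fin.cons Y 0), ?_, ?_⟩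
  · rintro ⟨_ | _ | i, hi⟩ h
    · simp at h
    · simp at h
    · rfl
  · simpa [Fin.sum_univ_succ] using hXY
end

section
/- Every matrix in M_2(ℚ) can be written as 2X₁² + X₂² for some X₁, X₂ ∈ M_2(ℚ). -/
theorem stmt_16 (A : Matrix (Fin 2) (Fin 2) ℚ) :
    ∃ X₁ X₂ : Matrix (Fin 2) (Fin 2) ℚ, (2 : ℚ) • X₁ ^ 2 + X₂ ^ 2 = A := by
  set a := A 0 0
  set b := A 0 1
  set c := A 1 0
  set d := A 1 1
  set β : ℚ := (1 - (a + d)) / 2 with hβ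
  set e : ℚ := ((a * d - b * c) - β ^ 2) / 2 with he
  refine ⟨!![0, e; 1, 0], !![a + β, b; c, d + β], ?_⟩
  have hA : A = !![a, b; c, d] := by
    ext i j
    fin_cases i <;> fin_cases j <;> rfl
  rw [hA]
  ext i j
  fin_cases i <;> fin_cases j <;>
    simp [pow_two, Matrix.mul_apply, Fin.sum_univ_two, hβ, he] <;> ring
end
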